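/- arXiv:1812.00274 — 2 statements merged into one kernel-verified Lean document; each statement's English description precedes it below -/
import Mathlib

section
/- Let n ∈ ℕ and let V ⊆ ℝ^n be a nonempty compact set. For every r ∈ ℕ, C_r^V ⊆ C_{r+1}^V. -/
noncomputable section

open Filter Topology

/-- The `r`-stack of a `d`-tensor `T`: `Stk^r(T)(u, w) = T(u)`. -/
def stk {α : Type*} (d r : ℕ) (T : (Fin d → α) → ℝ) : (Fin (d + r) → α) → ℝ :=
  fun v => T fun i => v (Fin.castAdd r i)

/-- The symmetrization of a `d`-tensor:
`σ(T)(v) = (1/d!) ∑_{π ∈ Sym(d)} T(v ∘ π)`. -/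
def tsym {α : Type*} (d : ℕ) (T : (Fin d → α) → ℝ) : (Fin d → α) → ℝ :=
  fun v => (d.factorial : ℝ)⁻¹ * ∑ π : Equiv.Perm (Fin d), T (v ∘ π)

/-- A symmetric two-variable function identified with a `2`-tensor. -/
def kerTensor {X : Type*} (K : X → X → ℝ) : (Fin 2 → X) → ℝ :=
  fun v => K (v 0) (v 1)

/-- A kernel: a continuous symmetric real-valued function of two variables. -/
def IsKernel {X : Type*} [TopologicalSpace X] (K : X → X → ℝ) : Prop :=
  Continuous (fun p : X × X => K p.1 p.2) ∧ ∀ x y, K x y = K y x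

/-- Positive semidefiniteness of a two-variable function. -/
def IsPSDKernel {X : Type*} (K : X → X → ℝ) : Prop :=
  ∀ (k : ℕ) (v : Fin k → X) (x : Fin k → ℝ),
    0 ≤ ∑ i, ∑ j, K (v i) (v j) * x i * x j

/-- Copositivity of a two-variable function. -/
def IsCopositiveKernel {X : Type*} (K : X → X → ℝ) : Prop :=
  ∀ (k : ℕ) (v : Fin k → X) (x : Fin k → ℝ), (∀ i, 0 ≤ x i) →
    0 ≤ ∑ i, ∑ j, K (v i) (v j) * x i * x j

/-- An `(r+2)`-tensor `S` is 2-PSD if it is continuous and every slice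
`(x, y) ↦ S(x, y, z)` is a PSD kernel. -/
def Is2PSD {X : Type*} [TopologicalSpace X] (r : ℕ)
    (S : (Fin (2 + r) → X) → ℝ) : Prop :=
  Continuous S ∧ ∀ z : Fin r → X, IsPSDKernel fun x y => S (Fin.append ![x, y] z)

/-- The tensor condition defining `C_r`: `σ(Stk^r M) = σ(N)` for some
nonnegative `(r+2)`-tensor `N`. -/
def CrCond {X : Type*} (r : ℕ) (M : X → X → ℝ) : Prop :=
  ∃ N : (Fin (2 + r) → X) → ℝ, (∀ v, 0 ≤ N v) ∧
    tsym (2 + r) (stk 2 r (kerTensor M)) = tsym (2 + r) N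

/-- Membership in `C_r`: a kernel satisfying the `C_r` tensor condition. -/
def memCr {X : Type*} [TopologicalSpace X] (r : ℕ) (M : X → X → ℝ) : Prop :=
  IsKernel M ∧ CrCond r M

/-- Membership in `Q_r`: a kernel `M` with `σ(Stk^r M) = σ(N) + σ(S)` for some
nonnegative `(r+2)`-tensor `N` and 2-PSD `(r+2)`-tensor `S`. -/
def memQr {X : Type*} [TopologicalSpace X] (r : ℕ) (M : X → X → ℝ) : Prop :=
  IsKernel M ∧ ∃ N S : (Fin (2 + r) → X) → ℝ, (∀ v, 0 ≤ N v) ∧ Is2PSD r S ∧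
    tsym (2 + r) (stk 2 r (kerTensor M)) =
      fun v => tsym (2 + r) N v + tsym (2 + r) S v

/-- The space of kernels on `V`, i.e. symmetric continuous functions on
`V × V`, with the topology of `C(V × V, ℝ)` (for `V` compact this is the
supremum-norm topology). -/
def KernelSpace {n : ℕ} (V : Set (Fin n → ℝ)) : Type _ :=
  {K : C(↥V × ↥V, ℝ) // ∀ x y, K (x, y) = K (y, x)}

instance {n : ℕ} (V : Set (Fin n → ℝ)) : TopologicalSpace (KernelSpace V) :=
  instTopologicalSpaceSubtype

/-- `COP(V)` as a subset of the space of kernels on `V`. -/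
def COPSet {n : ℕ} (V : Set (Fin n → ℝ)) : Set (KernelSpace V) :=
  {K | IsCopositiveKernel fun x y => K.1 (x, y)}

/-!
Stacking commutes with symmetrization in the sense that `σ(Stk^s(σ T)) = σ(Stk^s T)`: every
permutation of the first `d` slots extends to one of all `d + s` slots, so averaging over the
small symmetric group first changes nothing. Hence if `σ(Stk^r M) = σ(N)` with `N ≥ 0`, then
`σ(Stk^(r+1) M) = σ(Stk^1 σ(Stk^r M)) = σ(Stk^1 σ(N)) = σ(Stk^1 N)`, and `Stk^1 N ≥ 0`.
-/

open Finset

lemma stk_succ {α : Type*} (d r : ℕ) (T : (Fin d → α) → ℝ) :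
    stk d (r + 1) T = stk (d + r) 1 (stk d r T) :=
  rfl

lemma sum_perm_comp_castAdd_perm {α : Type*} {d r : ℕ} (T : (Fin d → α) → ℝ)
    (ρ : Equiv.Perm (Fin d)) (v : Fin (d + r) → α) :
    ∑ π : Equiv.Perm (Fin (d + r)), T (fun i => v (π (Fin.castAdd r (ρ i)))) =
      ∑ π : Equiv.Perm (Fin (d + r)), T (fun i => v (π (Fin.castAdd r i))) := by
  let e : Equiv.Perm (Fin (d + r)) :=
    Equiv.permCongr finSumFinEquiv (Equiv.sumCongr ρ (Equiv.refl _))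
  have he : ∀ i, e (Fin.castAdd r i) = Fin.castAdd r (ρ i) := fun i => by
    simp [e, Equiv.permCongr]
  simp_rw [← he]
  exact Equiv.sum_comp (Equiv.mulRight e) fun π => T fun i => v (π (Fin.castAdd r i))

lemma tsym_stk_tsym {α : Type*} (d r : ℕ) (T : (Fin d → α) → ℝ) :
    tsym (d + r) (stk d r (tsym d T)) = tsym (d + r) (stk d r T) := by
  funext v
  simp only [tsym, stk, Function.comp_def]
  congr 1
  have hfac : (d.factorial : ℝ) ≠ 0 := by positivity
  calc ∑ π : Equiv.Perm (Fin (d + r)), (d.factorial : ℝ)⁻¹ *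
        ∑ ρ : Equiv.Perm (Fin d), T (fun i => v (π (Fin.castAdd r (ρ i))))
      = (d.factorial : ℝ)⁻¹ * ∑ _ρ : Equiv.Perm (Fin d),
          ∑ π : Equiv.Perm (Fin (d + r)), T (fun i => v (π (Fin.castAdd r i))) := by
        rw [← mul_sum, sum_comm]
        simp only [sum_perm_comp_castAdd_perm]
    _ = ∑ π : Equiv.Perm (Fin (d + r)), T (fun i => v (π (Fin.castAdd r i))) := by
        rw [sum_const, card_univ, Fintype.card_perm, Fintype.card_fin, nsmul_eq_mul,
          inv_mul_cancel_left₀ hfac]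

theorem stmt3_general (n : ℕ) (V : Set (Fin n → ℝ)) (r : ℕ) (M : ↥V → ↥V → ℝ) (hM : memCr r M) :
    memCr (r + 1) M := by
  obtain ⟨hK, N, hN, hMN⟩ := hM
  refine ⟨hK, stk (2 + r) 1 N, fun v => hN _, ?_⟩
  calc tsym (2 + r + 1) (stk 2 (r + 1) (kerTensor M))
      = tsym (2 + r + 1) (stk (2 + r) 1 (tsym (2 + r) (stk 2 r (kerTensor M)))) := by
        rw [stk_succ, tsym_stk_tsym]
    _ = tsym (2 + r + 1) (stk (2 + r) 1 N) := by
        rw [hMN, tsym_stk_tsym]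

/-- `C_r^V ⊆ C_{r+1}^V`. -/
theorem stmt3 (n : ℕ) (V : Set (Fin n → ℝ)) (hVne : V.Nonempty)
    (hVc : IsCompact V) (r : ℕ) (M : ↥V → ↥V → ℝ) (hM : memCr r M) :
    memCr (r + 1) M :=
  stmt3_general n V r M hM
end
end

section
/- Let n ∈ ℕ, let V ⊆ ℝ^n be a nonempty compact set, let r ∈ ℕ and let K be a kernel on V. Then K ∈ C_r^V if and only if for every finite subset U ⊆ V the restriction K|_{U×U} belongs to C_r^U (the set C_r defined over the finite set U, where all functions on U are continuous). -/
noncomputable section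

open Filter Topology

open Set

lemma tsym_nonneg {α : Type*} {d : ℕ} {T : (Fin d → α) → ℝ} (hT : ∀ v, 0 ≤ T v)
    (v : Fin d → α) : 0 ≤ tsym d T v :=
  mul_nonneg (by positivity) (Finset.sum_nonneg fun π _ => hT _)

lemma tsym_tsym {α : Type*} (d : ℕ) (T : (Fin d → α) → ℝ) :
    tsym d (tsym d T) = tsym d T := by
  funext v
  have sum_comp_perm (π : Equiv.Perm (Fin d)) :
      ∑ σ : Equiv.Perm (Fin d), T ((v ∘ π) ∘ σ) = ∑ σ : Equiv.Perm (Fin d), T (v ∘ σ) :=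
    Fintype.sum_bijective (π * ·) (Group.mulLeft_bijective π) _ _ fun _ => rfl
  simp only [tsym, sum_comp_perm, Finset.sum_const, Finset.card_univ, Fintype.card_perm,
    Fintype.card_fin, nsmul_eq_mul]
  field_simp

/-- Since `σ` is idempotent, `σ(Stk^r M)` is itself the best witness `N`. -/
lemma crCond_iff_forall_tsym_nonneg {X : Type*} (r : ℕ) (M : X → X → ℝ) :
    CrCond r M ↔ ∀ v, 0 ≤ tsym (2 + r) (stk 2 r (kerTensor M)) v := by
  refine ⟨?_, fun h => ⟨_, h, (tsym_tsym _ _).symm⟩⟩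
  rintro ⟨N, hN, heq⟩
  rw [heq]
  exact tsym_nonneg hN

lemma CrCond.comp {X Y : Type*} {r : ℕ} {M : X → X → ℝ} (h : CrCond r M) (f : Y → X) :
    CrCond r fun x y => M (f x) (f y) :=
  (crCond_iff_forall_tsym_nonneg r _).2 fun v =>
    (crCond_iff_forall_tsym_nonneg r M).1 h (f ∘ v)

theorem stmt8_general (n : ℕ) (V : Set (Fin n → ℝ)) (r : ℕ) (K : ↥V → ↥V → ℝ) (hK : IsKernel K) :
    memCr r K ↔
      ∀ (U : Set (Fin n → ℝ)) (hUV : U ⊆ V), U.Finite →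
        ((∀ x y : ↥U, K (Set.inclusion hUV x) (Set.inclusion hUV y) =
            K (Set.inclusion hUV y) (Set.inclusion hUV x)) ∧
          CrCond r fun x y : ↥U =>
            K (Set.inclusion hUV x) (Set.inclusion hUV y)) := by
  refine ⟨fun hKr U hUV _ => ⟨fun x y => hK.2 _ _, hKr.2.comp _⟩, fun h => ⟨hK, ?_⟩⟩
  refine (crCond_iff_forall_tsym_nonneg r K).2 fun v => ?_
  -- `v` only sees the finitely many points of its range.
  have hUV : range (fun i => (v i : Fin n → ℝ)) ⊆ V := range_subset_iff.2 fun i => (v i).2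
  obtain ⟨-, hU⟩ := h _ hUV (finite_range _)
  exact (crCond_iff_forall_tsym_nonneg r _).1 hU fun i => ⟨v i, mem_range_self i⟩

/-- a kernel `K` on `V` lies in `C_r^V` iff for every finite
`U ⊆ V` the restriction of `K` to `U × U` lies in `C_r^U` (over a finite set
all functions are continuous, so membership in `C_r^U` amounts to symmetry
together with the `C_r` tensor condition). -/
theorem stmt8 (n : ℕ) (V : Set (Fin n → ℝ)) (hVne : V.Nonempty)
    (hVc : IsCompact V) (r : ℕ) (K : ↥V → ↥V → ℝ) (hK : IsKernel K) :
    memCr r K ↔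
      ∀ (U : Set (Fin n → ℝ)) (hUV : U ⊆ V), U.Finite →
        ((∀ x y : ↥U, K (Set.inclusion hUV x) (Set.inclusion hUV y) =
            K (Set.inclusion hUV y) (Set.inclusion hUV x)) ∧
          CrCond r fun x y : ↥U =>
            K (Set.inclusion hUV x) (Set.inclusion hUV y)) :=
  stmt8_general n V r K hK
end
end
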